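/- arXiv:0810.5646 — 2 statements merged into one kernel-verified Lean document; each statement's English description precedes it below -/
import Mathlib

section
/- Let n ≥ 1 be an integer, let 1 < p < p*(n), let A₀ be the unique positive radially symmetric classical solution of ΔA − A + Aᵖ = 0 in ℝⁿ with lim_{|x|→∞} A(x) = 0 and A(0) = max A, let α = ∫_{ℝⁿ} A₀(y)² dy, and let f(ω) = (ω − 1) ω^{n/2 − 2/(p−1)}. Suppose k > 0 and there exists ω > 0 with f(ω) = kα. Then the function A(x) := ω^{1/(p−1)} A₀(√ω · x) is a positive radially symmetric classical solution of ΔA − A + Aᵖ − k A ∫_{ℝⁿ} A² dx = 0 in ℝⁿ with lim_{|x|→∞} A(x) = 0 and A(0) = max_{x∈ℝⁿ} A(x). -/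
open Filter MeasureTheory Real

/-- The Laplacian of `A : ℝⁿ → ℝ`, as the sum of the pure second partial derivatives. -/
noncomputable def laplacian {n : ℕ} (A : EuclideanSpace ℝ (Fin n) → ℝ)
    (x : EuclideanSpace ℝ (Fin n)) : ℝ :=
  ∑ i : Fin n, iteratedFDeriv ℝ 2 A x ![EuclideanSpace.single i 1, EuclideanSpace.single i 1]

/-- `A` is a positive radially symmetric classical solution of `ΔA - ωA + A^p = 0` on `ℝⁿ`,
tending to `0` at infinity, with its maximum attained at the origin. -/
def IsSolOmega (n : ℕ) (p ω : ℝ) (A : EuclideanSpace ℝ (Fin n) → ℝ) : Prop :=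
  ContDiff ℝ 2 A ∧ (∀ x, 0 < A x) ∧ (∀ x y, ‖x‖ = ‖y‖ → A x = A y) ∧
    Tendsto A (cocompact _) (nhds 0) ∧ (∀ x, A x ≤ A 0) ∧
    ∀ x, laplacian A x - ω * A x + A x ^ p = 0

/-- `A` is a positive radially symmetric classical solution, with `A²` integrable, of the
globally coupled equation `ΔA - A + A^p - k A ∫ A² = 0` on `ℝⁿ`, tending to `0` at infinity,
with its maximum attained at the origin. -/
def IsSolK (n : ℕ) (p k : ℝ) (A : EuclideanSpace ℝ (Fin n) → ℝ) : Prop :=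
  ContDiff ℝ 2 A ∧ (∀ x, 0 < A x) ∧ (∀ x y, ‖x‖ = ‖y‖ → A x = A y) ∧
    Tendsto A (cocompact _) (nhds 0) ∧ (∀ x, A x ≤ A 0) ∧
    Integrable (fun x => (A x) ^ 2) ∧
    ∀ x, laplacian A x - A x + A x ^ p - k * A x * (∫ y, (A y) ^ 2) = 0

/-!
The scaling `A(x) = ω^(1/(p-1)) A₀(√ω x)` turns `ΔA₀ - A₀ + A₀^p = 0` into `ΔA - ωA + A^p = 0` and
multiplies `∫ A₀²` by `ω^(2/(p-1) - n/2)`, so the relation `f(ω) = kα` says exactly that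
`k ∫ A² = ω - 1`, which turns the rescaled equation into the coupled one.

The analytic input is that `∫ A₀²` is finite. As `A₀ → 0` at infinity, `A₀^p ≤ A₀ / 2` far out,
so there `A₀ ≤ 2 ΔA₀`. The barrier `w = C (1 + |x|²)^r` with `r < 0` satisfies `Δw ≤ w / 2` far
out, so at an interior positive maximum of `A₀ - w` on the exterior of a large ball we would get
`Δ(A₀ - w) > 0`; hence `A₀ ≤ w` there, for every `r < 0`.
-/

section LineDerivatives

variable {E : Type*} [NormedAddCommGroup E] [NormedSpace ℝ E]

lemma hasDerivAt_comp_add_smul {f : E → ℝ} (hf : Differentiable ℝ f) (x v : E) (t : ℝ) :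
    HasDerivAt (fun s : ℝ => f (x + s • v)) (fderiv ℝ f (x + t • v) v) t := by
  have hline : HasDerivAt (fun s : ℝ => x + s • v) v t := by
    simpa using ((hasDerivAt_id t).smul_const v).const_add x
  exact (hf _).hasFDerivAt.comp_hasDerivAt t hline

lemma hasDerivAt_fderiv_comp_add_smul {f : E → ℝ} (hf : ContDiff ℝ 2 f) (x v : E) :
    HasDerivAt (fun t : ℝ => fderiv ℝ f (x + t • v) v) (iteratedFDeriv ℝ 2 f x ![v, v]) 0 := by
  have hline : HasDerivAt (fun s : ℝ => x + s • v) v 0 := by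
    simpa using ((hasDerivAt_id (0 : ℝ)).smul_const v).const_add x
  have hf₁ : ContDiff ℝ 1 (fderiv ℝ f) := hf.fderiv_right (by norm_num)
  have hf' : HasFDerivAt (fderiv ℝ f) (fderiv ℝ (fderiv ℝ f) x) x :=
    (hf₁.differentiable one_ne_zero x).hasFDerivAt
  have h := (hf'.comp_hasDerivAt_of_eq 0 hline (by simp)).clm_apply (hasDerivAt_const 0 v)
  rw [iteratedFDeriv_two_apply]
  simpa using h

lemma iteratedFDeriv_two_eq_of_hasDerivAt_line {f : E → ℝ} (hf : ContDiff ℝ 2 f) {x v : E}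
    {ψ : ℝ → ℝ} {c : ℝ} (hψ : ∀ t, HasDerivAt (fun s : ℝ => f (x + s • v)) (ψ t) t)
    (hc : HasDerivAt ψ c 0) :
    iteratedFDeriv ℝ 2 f x ![v, v] = c := by
  have hψ_eq : ψ = fun t => fderiv ℝ f (x + t • v) v :=
    funext fun t => (hψ t).unique (hasDerivAt_comp_add_smul (hf.differentiable (by norm_num)) x v t)
  rw [hψ_eq] at hc
  exact (hc.unique (hasDerivAt_fderiv_comp_add_smul hf x v)).symm

end LineDerivatives

lemma nonpos_of_isLocalMax_of_hasDerivAt {g g' : ℝ → ℝ} {t₀ c : ℝ}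
    (hg : ∀ t, HasDerivAt g (g' t) t) (hg' : HasDerivAt g' c t₀) (hmax : IsLocalMax g t₀) :
    c ≤ 0 := by
  by_contra! hc
  have hderiv : deriv g = g' := funext fun t => (hg t).deriv
  have hmin : IsLocalMin g t₀ := isLocalMin_of_deriv_deriv_pos (by rwa [hderiv, hg'.deriv])
    (by rw [hderiv]; exact hmax.hasDerivAt_eq_zero (hg t₀)) (hg t₀).continuousAt
  -- a local maximum that is also a local minimum makes `g`, hence `g'`, locally constant
  have hconst : g =ᶠ[nhds t₀] fun _ => g t₀ := by
    filter_upwards [hmax, hmin] with t h₁ h₂ using le_antisymm h₁ h₂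
  have hg'_zero : g' =ᶠ[nhds t₀] fun _ => 0 := by
    simpa [hderiv] using hconst.deriv
  exact hc.ne' ((hg'.congr_of_eventuallyEq hg'_zero.symm).unique (hasDerivAt_const t₀ 0))

section Barrier

variable {E : Type*} [NormedAddCommGroup E] [InnerProductSpace ℝ E]

lemma contDiff_one_add_norm_sq_rpow (r : ℝ) : ContDiff ℝ 2 (fun y : E => (1 + ‖y‖ ^ 2) ^ r) :=
  (contDiff_const.add (contDiff_norm_sq ℝ)).rpow_const_of_ne fun y => by positivity

lemma iteratedFDeriv_two_one_add_norm_sq_rpow (r : ℝ) (x v : E) :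
    iteratedFDeriv ℝ 2 (fun y : E => (1 + ‖y‖ ^ 2) ^ r) x ![v, v] =
      4 * r * (r - 1) * (1 + ‖x‖ ^ 2) ^ (r - 2) * inner ℝ x v ^ 2 +
        2 * r * (1 + ‖x‖ ^ 2) ^ (r - 1) * ‖v‖ ^ 2 := by
  set a := ‖v‖ ^ 2
  set b := inner ℝ x v
  set q : ℝ → ℝ := fun t => 1 + ‖x‖ ^ 2 + 2 * b * t + a * t ^ 2
  have hq_eq : ∀ t, 1 + ‖x + t • v‖ ^ 2 = q t := fun t => by
    simp only [q, a, b, norm_add_sq_real, inner_smul_right, norm_smul, mul_pow, Real.norm_eq_abs,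
      sq_abs]
    ring
  have hq_pos : ∀ t, 0 < q t := fun t => hq_eq t ▸ by positivity
  have hq : ∀ t, HasDerivAt q (2 * b + 2 * a * t) t := fun t => by
    have h := ((hasDerivAt_id' t).const_mul (2 * b)).const_add (1 + ‖x‖ ^ 2) |>.fun_add
      ((hasDerivAt_pow 2 t).const_mul a)
    exact h.congr_deriv (by push_cast; ring)
  have hψ : ∀ t, HasDerivAt (fun s : ℝ => (1 + ‖x + s • v‖ ^ 2) ^ r)
      ((2 * b + 2 * a * t) * r * q t ^ (r - 1)) t := fun t => by
    simpa only [hq_eq] using (hq t).rpow_const (p := r) (Or.inl (hq_pos t).ne')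
  have hψ' : HasDerivAt (fun t => (2 * b + 2 * a * t) * r * q t ^ (r - 1))
      ((2 * a) * r * q 0 ^ (r - 1) + (2 * b + 2 * a * 0) * r *
        ((2 * b + 2 * a * 0) * (r - 1) * q 0 ^ (r - 1 - 1))) 0 := by
    have hlin : HasDerivAt (fun t : ℝ => 2 * b + 2 * a * t) (2 * a) 0 := by
      simpa using ((hasDerivAt_id (0 : ℝ)).const_mul (2 * a)).const_add (2 * b)
    exact (hlin.mul_const r).mul ((hq 0).rpow_const (Or.inl (hq_pos 0).ne'))
  rw [iteratedFDeriv_two_eq_of_hasDerivAt_line (contDiff_one_add_norm_sq_rpow r) hψ hψ']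
  have hq₀ : q 0 = 1 + ‖x‖ ^ 2 := by simp [q]
  rw [hq₀, show r - 1 - 1 = r - 2 by ring]
  ring

end Barrier

section Laplacian

variable {n : ℕ}

lemma laplacian_nonpos_of_isLocalMax {u : EuclideanSpace ℝ (Fin n) → ℝ} (hu : ContDiff ℝ 2 u)
    {x₀ : EuclideanSpace ℝ (Fin n)} (hmax : IsLocalMax u x₀) : laplacian u x₀ ≤ 0 := by
  refine Finset.sum_nonpos fun i _ => ?_
  set e : EuclideanSpace ℝ (Fin n) := EuclideanSpace.single i 1
  have hline : Tendsto (fun t : ℝ => x₀ + t • e) (nhds 0) (nhds x₀) := by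
    have h : Continuous fun t : ℝ => x₀ + t • e := by fun_prop
    simpa using h.tendsto 0
  have hmax_line : IsLocalMax (fun t : ℝ => u (x₀ + t • e)) 0 := by
    simpa [IsLocalMax, IsMaxFilter] using hline.eventually hmax
  exact nonpos_of_isLocalMax_of_hasDerivAt
    (hasDerivAt_comp_add_smul (hu.differentiable (by norm_num)) x₀ e)
    (hasDerivAt_fderiv_comp_add_smul hu x₀ e) hmax_line

lemma laplacian_sub {u w : EuclideanSpace ℝ (Fin n) → ℝ} (hu : ContDiff ℝ 2 u)
    (hw : ContDiff ℝ 2 w) (x : EuclideanSpace ℝ (Fin n)) :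
    laplacian (fun y => u y - w y) x = laplacian u x - laplacian w x := by
  change laplacian (u - w) x = _
  simp only [laplacian, iteratedFDeriv_sub_apply hu.contDiffAt hw.contDiffAt,
    sub_apply, Finset.sum_sub_distrib]

lemma laplacian_const_mul {u : EuclideanSpace ℝ (Fin n) → ℝ} (hu : ContDiff ℝ 2 u) (c : ℝ)
    (x : EuclideanSpace ℝ (Fin n)) :
    laplacian (fun y => c * u y) x = c * laplacian u x := by
  change laplacian (c • u) x = _
  simp only [laplacian, iteratedFDeriv_const_smul_apply hu.contDiffAt,
    smul_apply, smul_eq_mul, Finset.mul_sum]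

lemma laplacian_comp_smul {u : EuclideanSpace ℝ (Fin n) → ℝ} (hu : ContDiff ℝ 2 u) (s : ℝ)
    (x : EuclideanSpace ℝ (Fin n)) :
    laplacian (fun y => u (s • y)) x = s ^ 2 * laplacian u (s • x) := by
  set g := s • ContinuousLinearMap.id ℝ (EuclideanSpace ℝ (Fin n))
  have hg : (fun y => u (s • y)) = u ∘ g := rfl
  simp only [laplacian, Finset.mul_sum, hg, g.iteratedFDeriv_comp_right hu x le_rfl]
  refine Finset.sum_congr rfl fun i _ => ?_
  have hsmul := (iteratedFDeriv ℝ 2 u (g x)).map_smul_univ (fun _ => s)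
    ![EuclideanSpace.single i 1, EuclideanSpace.single i 1]
  simp only [Finset.prod_const, Finset.card_univ, Fintype.card_fin, smul_eq_mul] at hsmul
  rw [ContinuousMultilinearMap.compContinuousLinearMap_apply]
  exact hsmul

lemma laplacian_one_add_norm_sq_rpow (r : ℝ) (x : EuclideanSpace ℝ (Fin n)) :
    laplacian (fun y => (1 + ‖y‖ ^ 2) ^ r) x =
      4 * r * (r - 1) * (1 + ‖x‖ ^ 2) ^ (r - 2) * ‖x‖ ^ 2 +
        2 * n * r * (1 + ‖x‖ ^ 2) ^ (r - 1) := by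
  have hcoord : ∑ i : Fin n, inner ℝ x (EuclideanSpace.single i (1 : ℝ)) ^ 2 = ‖x‖ ^ 2 := by
    simp [EuclideanSpace.norm_sq_eq, EuclideanSpace.inner_single_right]
  rw [laplacian, Finset.sum_congr rfl fun i _ => iteratedFDeriv_two_one_add_norm_sq_rpow r x _,
    Finset.sum_add_distrib, ← Finset.mul_sum, hcoord]
  simp only [PiLp.norm_single, norm_one, one_pow, mul_one, Finset.sum_const,
    Finset.card_univ, Fintype.card_fin, nsmul_eq_mul]
  ring

lemma laplacian_one_add_norm_sq_rpow_le {r : ℝ} (hr : r ≤ 0) {x : EuclideanSpace ℝ (Fin n)}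
    (hx : 8 * r * (r - 1) ≤ 1 + ‖x‖ ^ 2) :
    laplacian (fun y => (1 + ‖y‖ ^ 2) ^ r) x ≤ (1 + ‖x‖ ^ 2) ^ r / 2 := by
  set q := 1 + ‖x‖ ^ 2
  have hq : 0 < q := by positivity
  have hq₁ : q ^ (r - 1) = q ^ r / q := Real.rpow_sub_one hq.ne' r
  have hq₂ : q ^ (r - 2) = q ^ r / q / q := by
    rw [show r - 2 = r - 1 - 1 by ring, Real.rpow_sub_one hq.ne', hq₁]
  have hP : 0 < q ^ r := Real.rpow_pos_of_pos hq r
  have hcoef : 0 ≤ 4 * r * (r - 1) := by nlinarith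
  have hx : ‖x‖ ^ 2 ≤ q := by simp [q]
  have hdrift : 2 * n * r * (q ^ r / q) ≤ 0 :=
    mul_nonpos_of_nonpos_of_nonneg (by nlinarith [n.cast_nonneg (α := ℝ)]) (by positivity)
  have hradial : 4 * r * (r - 1) * (q ^ r / q / q) * ‖x‖ ^ 2 ≤ q ^ r / 2 :=
    calc 4 * r * (r - 1) * (q ^ r / q / q) * ‖x‖ ^ 2
        ≤ 4 * r * (r - 1) * (q ^ r / q / q) * q := by gcongr
      _ = 4 * r * (r - 1) * q ^ r / q := by field_simp
      _ ≤ q ^ r / 2 := by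
        rw [div_le_iff₀ hq]
        nlinarith
  rw [laplacian_one_add_norm_sq_rpow, hq₁, hq₂]
  linarith

end Laplacian

lemma eventually_cocompact_iff_forall_norm_ge {E : Type*} [NormedAddCommGroup E] [ProperSpace E]
    {P : E → Prop} : (∀ᶠ x in cocompact E, P x) ↔ ∃ R, ∀ x, R ≤ ‖x‖ → P x := by
  rw [← Metric.cobounded_eq_cocompact, hasBasis_cobounded_norm.eventually_iff]
  simp

lemma tendsto_one_add_norm_sq_rpow_cocompact {E : Type*} [NormedAddCommGroup E] [ProperSpace E]
    {r : ℝ} (hr : r < 0) : Tendsto (fun x : E => (1 + ‖x‖ ^ 2) ^ r) (cocompact E) (nhds 0) := by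
  have hq : Tendsto (fun x : E => 1 + ‖x‖ ^ 2) (cocompact E) atTop :=
    tendsto_atTop_add_const_left _ _
      ((tendsto_pow_atTop two_ne_zero).comp tendsto_norm_cocompact_atTop)
  have h := (tendsto_rpow_neg_atTop (neg_pos.2 hr)).comp hq
  rwa [neg_neg] at h

section MaximumPrinciple

variable {n : ℕ}

lemma le_of_laplacian_lt_of_tendsto {u w : EuclideanSpace ℝ (Fin n) → ℝ} (hu : ContDiff ℝ 2 u)
    (hw : ContDiff ℝ 2 w) (hlim : Tendsto (fun x => u x - w x) (cocompact _) (nhds 0)) {R : ℝ}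
    (hsphere : ∀ x, ‖x‖ = R → u x ≤ w x)
    (hlap : ∀ x, R < ‖x‖ → w x < u x → laplacian w x < laplacian u x) {x : EuclideanSpace ℝ (Fin n)}
    (hx : R ≤ ‖x‖) : u x ≤ w x := by
  by_contra! hx_pos
  set v := fun y => u y - w y
  have hv : 0 < v x := sub_pos.2 hx_pos
  have hfar : ∀ᶠ y in cocompact _ ⊓ Filter.principal {y | R ≤ ‖y‖}, v y ≤ v x :=
    (hlim.eventually (eventually_le_nhds hv)).filter_mono inf_le_left
  obtain ⟨x₀, hx₀, hmax⟩ := (hu.continuous.sub hw.continuous).continuousOn.exists_isMaxOn'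
    (isClosed_le continuous_const continuous_norm) hx hfar
  have hv₀ : 0 < v x₀ := hv.trans_le (hmax hx)
  have hx₀_out : R < ‖x₀‖ :=
    hx₀.lt_of_ne fun h => (sub_nonpos.2 (hsphere x₀ h.symm)).not_gt hv₀
  have hloc : IsLocalMax v x₀ := hmax.isLocalMax <| Filter.mem_of_superset
    ((isOpen_lt continuous_const continuous_norm).mem_nhds hx₀_out) fun y (hy : R < ‖y‖) => hy.le
  have hΔ := laplacian_nonpos_of_isLocalMax (hu.sub hw) hloc
  rw [laplacian_sub hu hw] at hΔ
  linarith [hlap x₀ hx₀_out (sub_pos.1 hv₀)]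

lemma exists_eventually_le_mul_one_add_norm_sq_rpow {A : EuclideanSpace ℝ (Fin n) → ℝ}
    (hA : ContDiff ℝ 2 A) (hlim : Tendsto A (cocompact _) (nhds 0))
    (hsub : ∀ᶠ x in cocompact _, A x ≤ 2 * laplacian A x) {r : ℝ} (hr : r < 0) :
    ∃ C, ∀ᶠ x in cocompact _, A x ≤ C * (1 + ‖x‖ ^ 2) ^ r := by
  obtain ⟨R₀, hR₀⟩ := eventually_cocompact_iff_forall_norm_ge.1
    ((hlim.eventually (eventually_lt_nhds one_pos)).and hsub)
  set R := max R₀ (8 * r * (r - 1))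
  set C := (1 + R ^ 2) ^ (-r)
  set w := fun y : EuclideanSpace ℝ (Fin n) => C * (1 + ‖y‖ ^ 2) ^ r
  have hw : ContDiff ℝ 2 w := contDiff_const.mul (contDiff_one_add_norm_sq_rpow r)
  have hw_lim : Tendsto w (cocompact _) (nhds 0) := by
    simpa using (tendsto_one_add_norm_sq_rpow_cocompact hr).const_mul C
  have hsphere : ∀ x, ‖x‖ = R → A x ≤ w x := fun x hx => by
    have hw₁ : w x = 1 := by
      simp only [w, C, hx, ← Real.rpow_add (by positivity : (0 : ℝ) < 1 + R ^ 2), neg_add_cancel,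
        Real.rpow_zero]
    exact hw₁ ▸ (hR₀ x (hx ▸ le_max_left _ _)).1.le
  have hlap : ∀ x, R < ‖x‖ → w x < A x → laplacian w x < laplacian A x := fun x hx hwA => by
    have hbarrier : 8 * r * (r - 1) ≤ 1 + ‖x‖ ^ 2 := by
      nlinarith [le_max_right R₀ (8 * r * (r - 1)), norm_nonneg x]
    have hΔw : laplacian w x ≤ w x / 2 := by
      rw [laplacian_const_mul (contDiff_one_add_norm_sq_rpow r)]
      have := laplacian_one_add_norm_sq_rpow_le hr.le hbarrier
      have hC : 0 ≤ C := by positivity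
      simp only [w]
      nlinarith
    linarith [(hR₀ x ((le_max_left _ _).trans hx.le)).2]
  refine ⟨C, eventually_cocompact_iff_forall_norm_ge.2 ⟨R, fun x hx => ?_⟩⟩
  exact le_of_laplacian_lt_of_tendsto hA hw (by simpa using hlim.sub hw_lim) hsphere hlap hx

end MaximumPrinciple

lemma integral_sq_const_mul_comp_smul {n : ℕ} (A : EuclideanSpace ℝ (Fin n) → ℝ) (c s : ℝ) :
    ∫ x, (c * A (s • x)) ^ 2 = c ^ 2 * |(s ^ n)⁻¹| * ∫ x, A x ^ 2 := by
  simp_rw [mul_pow]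
  rw [integral_const_mul, Measure.integral_comp_smul volume (fun y => A y ^ 2),
    finrank_euclideanSpace_fin, smul_eq_mul, mul_assoc]

section Solutions

variable {n : ℕ} {p : ℝ} {A : EuclideanSpace ℝ (Fin n) → ℝ}

lemma IsSolOmega.eventually_le_two_mul_laplacian (hp : 1 < p) (hA : IsSolOmega n p 1 A) :
    ∀ᶠ x in cocompact _, A x ≤ 2 * laplacian A x := by
  obtain ⟨-, hpos, -, hlim, -, heq⟩ := hA
  have hsmall : ∀ᶠ x in cocompact _, A x ^ (p - 1) < 1 / 2 := by
    have h := hlim.rpow_const (p := p - 1) (Or.inr (by linarith))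
    rw [Real.zero_rpow (by linarith)] at h
    exact h.eventually (eventually_lt_nhds (by norm_num))
  filter_upwards [hsmall] with x hx
  have hpow : A x ^ p = A x ^ (p - 1) * A x := by
    rw [← Real.rpow_add_one (hpos x).ne', sub_add_cancel]
  nlinarith [heq x, hpos x]

lemma IsSolOmega.integrable_sq (hp : 1 < p) (hA : IsSolOmega n p 1 A) :
    Integrable (fun x => A x ^ 2) := by
  have hsub := hA.eventually_le_two_mul_laplacian hp
  obtain ⟨hC2, hpos, -, hlim, -, -⟩ := hA
  obtain ⟨C, hC⟩ := exists_eventually_le_mul_one_add_norm_sq_rpow hC2 hlim hsub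
    (r := -(n + 1) / 4) (by linarith [n.cast_nonneg (α := ℝ)])
  have hdecay :
      (fun x => A x ^ 2) =O[cocompact _] fun x => (1 + ‖x‖ ^ 2) ^ (-(n + 1 : ℝ) / 2) := by
    refine Asymptotics.IsBigO.of_bound (C ^ 2) ?_
    filter_upwards [hC] with x hx
    have hq : (0 : ℝ) < 1 + ‖x‖ ^ 2 := by positivity
    have hsq : ((1 + ‖x‖ ^ 2) ^ (-(n + 1 : ℝ) / 4)) ^ 2 = (1 + ‖x‖ ^ 2) ^ (-(n + 1 : ℝ) / 2) := by
      rw [← Real.rpow_natCast, ← Real.rpow_mul hq.le]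
      ring_nf
    rw [Real.norm_of_nonneg (sq_nonneg _), Real.norm_of_nonneg (by positivity), ← hsq, ← mul_pow]
    exact pow_le_pow_left₀ (hpos x).le hx 2
  refine (hC2.continuous.pow 2).locallyIntegrable.integrable_of_isBigO_cocompact hdecay
    ((integrable_rpow_neg_one_add_norm_sq ?_).integrableAtFilter _)
  simp

lemma IsSolOmega.rescale (hp : 1 < p) {ω : ℝ} (hω : 0 < ω) (hA : IsSolOmega n p 1 A) :
    IsSolOmega n p ω (fun x => ω ^ (1 / (p - 1)) * A (√ω • x)) := by
  obtain ⟨hC2, hpos, hrad, hlim, hmax, heq⟩ := hA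
  set c := ω ^ (1 / (p - 1))
  set s := √ω
  have hc : 0 < c := Real.rpow_pos_of_pos hω _
  have hs : s ≠ 0 := (Real.sqrt_pos.2 hω).ne'
  have hcp : c ^ p = ω * c := by
    rw [← Real.rpow_mul hω.le, ← Real.rpow_one_add' hω.le (by positivity)]
    congr 1
    field_simp [(by linarith : p - 1 ≠ 0)]
    ring
  have hC2s : ContDiff ℝ 2 fun x => A (s • x) := hC2.comp (contDiff_const_smul s)
  refine ⟨contDiff_const.mul hC2s, fun x => mul_pos hc (hpos _), fun x y hxy => ?_, ?_,
    fun x => ?_, fun x => ?_⟩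
  · simp only [hrad (s • x) (s • y) (by rw [norm_smul, norm_smul, hxy])]
  · simpa using (hlim.comp (Homeomorph.smulOfNeZero s hs).map_cocompact.le).const_mul c
  · simpa using mul_le_mul_of_nonneg_left (hmax (s • x)) hc.le
  · rw [laplacian_const_mul hC2s, laplacian_comp_smul hC2, Real.sq_sqrt hω.le,
      Real.mul_rpow hc.le (hpos _).le, hcp]
    linear_combination (c * ω) * heq (s • x)

lemma IsSolOmega.isSolK {k ω : ℝ} (hA : IsSolOmega n p ω A)
    (hint : Integrable (fun x => A x ^ 2)) (hk : k * ∫ x, A x ^ 2 = ω - 1) : IsSolK n p k A := by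
  obtain ⟨hC2, hpos, hrad, hlim, hmax, heq⟩ := hA
  exact ⟨hC2, hpos, hrad, hlim, hmax, hint, fun x => by linear_combination heq x - A x * hk⟩

end Solutions

theorem stmt_7_general (n : ℕ) (p : ℝ) (hp : 1 < p)
    (A₀ : EuclideanSpace ℝ (Fin n) → ℝ) (hA₀ : IsSolOmega n p 1 A₀)
    (α : ℝ) (hα : α = ∫ y, (A₀ y) ^ 2)
    (f : ℝ → ℝ) (hf : ∀ ω, f ω = (ω - 1) * ω ^ ((n : ℝ) / 2 - 2 / (p - 1)))
    (k ω : ℝ) (hω : 0 < ω) (hcons : f ω = k * α) :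
    IsSolK n p k (fun x => ω ^ (1 / (p - 1)) * A₀ (Real.sqrt ω • x)) := by
  have hint : Integrable fun x => (ω ^ (1 / (p - 1)) * A₀ (√ω • x)) ^ 2 := by
    simpa only [mul_pow] using
      ((hA₀.integrable_sq hp).comp_smul (Real.sqrt_pos.2 hω).ne').const_mul
        ((ω ^ (1 / (p - 1))) ^ 2)
  have hscale : (ω ^ (1 / (p - 1))) ^ 2 * |(√ω ^ n)⁻¹| = ω ^ (-((n : ℝ) / 2 - 2 / (p - 1))) := by
    rw [Real.sqrt_eq_rpow, ← Real.rpow_natCast, ← Real.rpow_natCast, ← Real.rpow_mul hω.le,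
      ← Real.rpow_mul hω.le, ← Real.rpow_neg hω.le, abs_of_pos (by positivity),
      ← Real.rpow_add hω]
    ring_nf
  refine (hA₀.rescale hp hω).isSolK hint ?_
  rw [integral_sq_const_mul_comp_smul, ← hα, hscale, Real.rpow_neg hω.le, mul_left_comm, ← hcons,
    hf, mul_comm, mul_inv_cancel_right₀ (Real.rpow_pos_of_pos hω _).ne']

/-- If `ω > 0` satisfies the consistency relation `f(ω) = kα`, then
`x ↦ ω^(1/(p-1)) A₀(√ω x)` solves the globally coupled problem. -/
theorem stmt_7 (n : ℕ) (hn : 1 ≤ n) (p : ℝ) (hp : 1 < p)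
    (hps : 3 ≤ n → p < ((n : ℝ) + 2) / ((n : ℝ) - 2))
    (A₀ : EuclideanSpace ℝ (Fin n) → ℝ) (hA₀ : IsSolOmega n p 1 A₀)
    (α : ℝ) (hα : α = ∫ y, (A₀ y) ^ 2)
    (f : ℝ → ℝ) (hf : ∀ ω, f ω = (ω - 1) * ω ^ ((n : ℝ) / 2 - 2 / (p - 1)))
    (k ω : ℝ) (hk : 0 < k) (hω : 0 < ω) (hcons : f ω = k * α) :
    IsSolK n p k (fun x => ω ^ (1 / (p - 1)) * A₀ (Real.sqrt ω • x)) :=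
  stmt_7_general n p hp A₀ hA₀ α hα f hf k ω hω hcons
end

section
/- Let n ≥ 1 be an integer and let p = 1 + 4/(n+2). If k ≥ 1, then the problem ΔA − A + Aᵖ − k A ∫_{ℝⁿ} A² dx = 0 in ℝⁿ, with A > 0, lim_{|x|→∞} A(x) = 0 and A(0) = max_{x∈ℝⁿ} A(x), has no positive radially symmetric classical solution with A² integrable. -/
open Filter MeasureTheory Real

/-!
A solution of the coupled problem solves `ΔA - ωA + A^p = 0` with `ω = 1 + k ∫ A²`, so it
suffices to show `ω ≤ ∫ A²` for such solutions. Let `M = A 0` and `t = M^(p-1) - ω`. The maximum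
at the origin gives `t ≥ 0`, and then the equation gives `ΔA ≥ -M t` everywhere. Applying the
maximum principle on balls to `A + c‖x‖²` and using radial symmetry yields
`A x ≥ M - M t ‖x‖² / (2n)`; decay at infinity forces `t > 0`. Hence `A ≥ M/2` on the cube of
half-side `t^(-1/2)`, so `∫ A² ≥ (M/2)² (2 t^(-1/2))^n`. As `(p - 1)(n + 2) = 4` we have
`M⁴ = (ω + t)^(n+2)`, and the elementary inequality `16 ω² tⁿ ≤ 4ⁿ (ω + t)^(n+2)` turns this into
`ω ≤ ∫ A²`, which is impossible when `ω = 1 + k ∫ A²` with `k ≥ 1`.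
-/

open Topology
open scoped Laplacian

lemma IsLocalMax.deriv_deriv_nonpos {f : ℝ → ℝ} {a : ℝ} (h : IsLocalMax f a)
    (hc : ContinuousAt f a) : deriv (deriv f) a ≤ 0 := by
  by_contra! hpos
  have hmin : IsLocalMin f a := isLocalMin_of_deriv_deriv_pos hpos h.deriv_eq_zero hc
  have hconst : f =ᶠ[𝓝 a] fun _ => f a := (h.and hmin).mono fun x hx => le_antisymm hx.1 hx.2
  have : deriv (deriv f) a = 0 := by
    rw [hconst.deriv.deriv_eq]
    simp
  linarith

section NormedSpace

variable {E : Type*} [NormedAddCommGroup E] [NormedSpace ℝ E]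

lemma hasDerivAt_add_smul (x v : E) (τ : ℝ) : HasDerivAt (fun σ : ℝ => x + σ • v) v τ := by
  simpa using ((hasDerivAt_id τ).smul_const v).const_add x

lemma iteratedFDeriv_two_apply_self_eq_deriv_deriv {f : E → ℝ} (hf : ContDiff ℝ 2 f) (x v : E) :
    iteratedFDeriv ℝ 2 f x ![v, v] = deriv (deriv fun τ : ℝ => f (x + τ • v)) 0 := by
  have hline : (fun τ : ℝ => f (x + τ • v)) =
      (fun y => f (x + y)) ∘ ContinuousLinearMap.smulRight (1 : ℝ →L[ℝ] ℝ) v := by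
    ext; simp
  have hf' : ContDiff ℝ 2 fun y => f (x + y) := hf.comp (contDiff_const.add contDiff_id)
  rw [← iteratedDeriv_one (f := fun τ : ℝ => f (x + τ • v)), ← iteratedDeriv_succ,
    iteratedDeriv_eq_iteratedFDeriv, hline,
    ContinuousLinearMap.iteratedFDeriv_comp_right _ hf' _ le_rfl, iteratedFDeriv_comp_add_left]
  simp only [ContinuousMultilinearMap.compContinuousLinearMap_apply,
    ContinuousLinearMap.smulRight_apply, add_zero, map_zero]
  congr 1
  ext i
  fin_cases i <;> simp

lemma IsLocalMax.iteratedFDeriv_two_apply_self_nonpos {f : E → ℝ} {x : E} (h : IsLocalMax f x)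
    (hf : ContDiff ℝ 2 f) (v : E) : iteratedFDeriv ℝ 2 f x ![v, v] ≤ 0 := by
  have hline : Continuous fun τ : ℝ => x + τ • v := by fun_prop
  rw [iteratedFDeriv_two_apply_self_eq_deriv_deriv hf]
  have hmax : IsLocalMax (fun τ : ℝ => f (x + τ • v)) 0 :=
    IsLocalMax.comp_continuous (by simpa using h) hline.continuousAt
  exact hmax.deriv_deriv_nonpos (hf.continuous.comp hline).continuousAt

end NormedSpace

section InnerProductSpace

variable {E : Type*} [NormedAddCommGroup E] [InnerProductSpace ℝ E]

lemma deriv_deriv_norm_add_smul_sq (x v : E) :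
    deriv (deriv fun τ : ℝ => ‖x + τ • v‖ ^ 2) 0 = 2 * ‖v‖ ^ 2 := by
  have hfirst : deriv (fun τ : ℝ => ‖x + τ • v‖ ^ 2) = fun τ => 2 * inner ℝ (x + τ • v) v :=
    funext fun τ => (hasDerivAt_add_smul x v τ).norm_sq.deriv
  rw [hfirst, (((hasDerivAt_add_smul x v 0).inner ℝ (hasDerivAt_const 0 v)).const_mul 2).deriv]
  simp

variable [FiniteDimensional ℝ E]

lemma laplacian_norm_sq (x : E) : Δ (fun y : E => ‖y‖ ^ 2) x = 2 * Module.finrank ℝ E := by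
  simp [InnerProductSpace.laplacian_eq_iteratedFDeriv_stdOrthonormalBasis,
    iteratedFDeriv_two_apply_self_eq_deriv_deriv (contDiff_norm_sq ℝ),
    deriv_deriv_norm_add_smul_sq, mul_comm]

lemma IsLocalMax.laplacian_nonpos {f : E → ℝ} {x : E} (h : IsLocalMax f x)
    (hf : ContDiff ℝ 2 f) : Δ f x ≤ 0 := by
  rw [InnerProductSpace.laplacian_eq_iteratedFDeriv_stdOrthonormalBasis]
  exact Finset.sum_nonpos fun i _ => h.iteratedFDeriv_two_apply_self_nonpos hf _

end InnerProductSpace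

section MaximumPrinciple

variable {E : Type*} [NormedAddCommGroup E] [InnerProductSpace ℝ E] [FiniteDimensional ℝ E]

lemma laplacian_add_mul_norm_sq {f : E → ℝ} (hf : ContDiff ℝ 2 f) (c : ℝ) (x : E) :
    Δ (fun y => f y + c * ‖y‖ ^ 2) x = Δ f x + 2 * Module.finrank ℝ E * c := by
  have hq : ContDiff ℝ 2 fun y : E => ‖y‖ ^ 2 := contDiff_norm_sq ℝ
  change Δ (f + c • fun y : E => ‖y‖ ^ 2) x = _
  rw [hf.contDiffAt.laplacian_add (f₂ := c • fun y : E => ‖y‖ ^ 2) (hq.const_smul c).contDiffAt,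
    InnerProductSpace.laplacian_smul c hq.contDiffAt, smul_eq_mul, laplacian_norm_sq]
  ring

lemma exists_mem_sphere_le_of_laplacian_pos {f : E → ℝ} (hf : ContDiff ℝ 2 f)
    (hΔ : ∀ y, 0 < Δ f y) (c : E) {r : ℝ} (hr : 0 ≤ r) : ∃ z ∈ Metric.sphere c r, f c ≤ f z := by
  obtain ⟨z, hz, hmax⟩ := (isCompact_closedBall c r).exists_isMaxOn
    (Metric.nonempty_closedBall.2 hr) hf.continuous.continuousOn
  refine ⟨z, ?_, hmax (Metric.mem_closedBall_self hr)⟩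
  by_contra hzs
  have hzball : z ∈ Metric.ball c r := by
    rw [← Metric.closedBall_sdiff_sphere]
    exact ⟨hz, hzs⟩
  have hloc : IsLocalMax f z :=
    hmax.isLocalMax (mem_of_superset (Metric.isOpen_ball.mem_nhds hzball)
      Metric.ball_subset_closedBall)
  exact (hΔ z).not_ge (hloc.laplacian_nonpos hf)

lemma le_add_mul_norm_sq_of_neg_le_laplacian [Nontrivial E] {f : E → ℝ} (hf : ContDiff ℝ 2 f)
    (hrad : ∀ x y, ‖x‖ = ‖y‖ → f x = f y) {δ : ℝ} (hΔ : ∀ y, -δ ≤ Δ f y) (x : E) :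
    f 0 ≤ f x + δ / (2 * Module.finrank ℝ E) * ‖x‖ ^ 2 := by
  have hd : (0 : ℝ) < Module.finrank ℝ E := by exact_mod_cast Module.finrank_pos
  have hcomp : ∀ c, δ / (2 * Module.finrank ℝ E) < c → f 0 ≤ f x + c * ‖x‖ ^ 2 := by
    intro c hc
    have hg : ContDiff ℝ 2 fun y => f y + c * ‖y‖ ^ 2 :=
      hf.add (contDiff_const.mul (contDiff_norm_sq ℝ))
    have hΔg : ∀ y, 0 < Δ (fun y => f y + c * ‖y‖ ^ 2) y := by
      intro y
      rw [div_lt_iff₀ (by positivity)] at hc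
      rw [laplacian_add_mul_norm_sq hf]
      linarith [hΔ y]
    obtain ⟨z, hz, hle⟩ := exists_mem_sphere_le_of_laplacian_pos hg hΔg 0 (norm_nonneg x)
    rw [mem_sphere_zero_iff_norm] at hz
    simpa [hz, hrad z x hz] using hle
  have hlim : Tendsto (fun c => f x + c * ‖x‖ ^ 2) (𝓝[>] (δ / (2 * Module.finrank ℝ E)))
      (𝓝 (f x + δ / (2 * Module.finrank ℝ E) * ‖x‖ ^ 2)) :=
    ((continuous_const.add (continuous_id.mul continuous_const)).tendsto _).mono_left
      nhdsWithin_le_nhds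
  exact ge_of_tendsto hlim (eventually_nhdsWithin_of_forall hcomp)

end MaximumPrinciple

section Euclidean

variable {n : ℕ}

lemma laplacian_eq_laplacian (A : EuclideanSpace ℝ (Fin n) → ℝ) : laplacian A = Δ A := by
  rw [InnerProductSpace.laplacian_eq_iteratedFDeriv_orthonormalBasis A
    (EuclideanSpace.basisFun (Fin n) ℝ)]
  ext x
  simp [laplacian]

def cube (n : ℕ) (a : ℝ) : Set (EuclideanSpace ℝ (Fin n)) := {x | ∀ i, x i ∈ Set.Icc (-a) a}

lemma cube_eq_preimage (a : ℝ) :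
    cube n a = WithLp.ofLp ⁻¹' Set.univ.pi fun _ => Set.Icc (-a) a := by
  ext x
  simp [cube, Pi.le_def, forall_and]

lemma measurableSet_cube (a : ℝ) : MeasurableSet (cube n a) := by
  rw [cube_eq_preimage]
  exact (PiLp.volume_preserving_ofLp (Fin n)).measurable
    (MeasurableSet.univ_pi fun _ => measurableSet_Icc)

lemma volume_cube (a : ℝ) : volume (cube n a) = ENNReal.ofReal (2 * a) ^ n := by
  rw [cube_eq_preimage, (PiLp.volume_preserving_ofLp (Fin n)).measure_preimage
    (MeasurableSet.univ_pi fun _ => measurableSet_Icc).nullMeasurableSet, volume_pi_pi]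
  simp [Real.volume_Icc, two_mul]

lemma norm_sq_le_of_mem_cube {a : ℝ} {x : EuclideanSpace ℝ (Fin n)} (hx : x ∈ cube n a) :
    ‖x‖ ^ 2 ≤ n * a ^ 2 := by
  rw [EuclideanSpace.norm_sq_eq]
  calc ∑ i, ‖x i‖ ^ 2 ≤ ∑ _i : Fin n, a ^ 2 :=
        Finset.sum_le_sum fun i _ => by
          rw [Real.norm_eq_abs, sq_abs]
          exact sq_le_sq' (hx i).1 (hx i).2
    _ = n * a ^ 2 := by simp

lemma mul_two_mul_pow_le_integral {f : EuclideanSpace ℝ (Fin n) → ℝ} (hf : Integrable f)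
    (hf0 : 0 ≤ f) {a m : ℝ} (ha : 0 ≤ a) (hm : ∀ x ∈ cube n a, m ≤ f x) :
    m * (2 * a) ^ n ≤ ∫ x, f x := by
  have hvol : volume.real (cube n a) = (2 * a) ^ n := by
    simp [measureReal_def, volume_cube, ENNReal.toReal_ofReal, ha]
  calc m * (2 * a) ^ n = m * volume.real (cube n a) := by rw [hvol]
    _ ≤ ∫ x in cube n a, f x :=
      setIntegral_ge_of_const_le_real (measurableSet_cube a)
        (by rw [volume_cube]; exact ENNReal.pow_ne_top ENNReal.ofReal_ne_top) hm hf.integrableOn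
    _ ≤ ∫ x, f x := setIntegral_le_integral hf (Eventually.of_forall hf0)

end Euclidean

lemma sixteen_mul_sq_mul_pow_le {n : ℕ} (hn : 1 ≤ n) {ω t : ℝ} (hω : 0 ≤ ω) (ht : 0 ≤ t) :
    16 * ω ^ 2 * t ^ n ≤ 4 ^ n * (ω + t) ^ (n + 2) := by
  obtain rfl | hn := hn.eq_or_lt
  · norm_num
    nlinarith [mul_nonneg hω (sq_nonneg (2 * ω - t)), mul_nonneg hω (sq_nonneg t), pow_nonneg ht 3]
  · have h16 : (16 : ℝ) ≤ 4 ^ n := by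
      calc (16 : ℝ) = 4 ^ 2 := by norm_num
        _ ≤ 4 ^ n := pow_le_pow_right₀ (by norm_num) hn
    calc 16 * ω ^ 2 * t ^ n ≤ 4 ^ n * (ω + t) ^ 2 * (ω + t) ^ n := by
          gcongr <;> linarith
      _ = 4 ^ n * (ω + t) ^ (n + 2) := by ring

lemma nontrivial_euclideanSpace_fin {n : ℕ} (hn : 1 ≤ n) : Nontrivial (EuclideanSpace ℝ (Fin n)) :=
  Module.nontrivial_of_finrank_pos (R := ℝ) (by rwa [finrank_euclideanSpace_fin])

namespace IsSolOmega

variable {n : ℕ} {p ω : ℝ} {A : EuclideanSpace ℝ (Fin n) → ℝ}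

lemma laplacian_eq (hA : IsSolOmega n p ω A) (x : EuclideanSpace ℝ (Fin n)) :
    Δ A x = A x * (ω - A x ^ (p - 1)) := by
  obtain ⟨-, hpos, -, -, -, hpde⟩ := hA
  rw [← laplacian_eq_laplacian, Real.rpow_sub_one (hpos x).ne', mul_sub,
    mul_div_cancel₀ _ (hpos x).ne']
  linarith [hpde x]

lemma le_rpow_sub_one (hA : IsSolOmega n p ω A) : ω ≤ A 0 ^ (p - 1) := by
  have ⟨hC, hpos, _, _, hmax, _⟩ := hA
  have h := IsLocalMax.laplacian_nonpos (Eventually.of_forall hmax) hC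
  rw [hA.laplacian_eq] at h
  exact sub_nonpos.1 (nonpos_of_mul_nonpos_right h (hpos 0))

lemma neg_le_laplacian (hA : IsSolOmega n p ω A) (hp : 1 ≤ p) (y : EuclideanSpace ℝ (Fin n)) :
    -(A 0 * (A 0 ^ (p - 1) - ω)) ≤ Δ A y := by
  have ⟨_, hpos, _, _, hmax, _⟩ := hA
  have hω : ω - A 0 ^ (p - 1) ≤ 0 := sub_nonpos.2 hA.le_rpow_sub_one
  have hpow : A y ^ (p - 1) ≤ A 0 ^ (p - 1) :=
    Real.rpow_le_rpow (hpos y).le (hmax y) (by linarith)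
  calc -(A 0 * (A 0 ^ (p - 1) - ω)) = A 0 * (ω - A 0 ^ (p - 1)) := by ring
    _ ≤ A y * (ω - A 0 ^ (p - 1)) := mul_le_mul_of_nonpos_right (hmax y) hω
    _ ≤ A y * (ω - A y ^ (p - 1)) := by gcongr; exact (hpos y).le
    _ = Δ A y := (hA.laplacian_eq y).symm

lemma apply_zero_le (hA : IsSolOmega n p ω A) (hn : 1 ≤ n) (hp : 1 ≤ p)
    (x : EuclideanSpace ℝ (Fin n)) :
    A 0 ≤ A x + A 0 * (A 0 ^ (p - 1) - ω) / (2 * n) * ‖x‖ ^ 2 := by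
  have := nontrivial_euclideanSpace_fin hn
  have ⟨hC, _, hrad, _, _, _⟩ := hA
  simpa only [finrank_euclideanSpace_fin] using
    le_add_mul_norm_sq_of_neg_le_laplacian hC hrad (hA.neg_le_laplacian hp) x

lemma lt_rpow_sub_one (hA : IsSolOmega n p ω A) (hn : 1 ≤ n) (hp : 1 ≤ p) :
    ω < A 0 ^ (p - 1) := by
  refine hA.le_rpow_sub_one.lt_of_ne fun heq => ?_
  have := nontrivial_euclideanSpace_fin hn
  have ⟨_, hpos, _, htend, _, _⟩ := hA
  obtain ⟨x, hx⟩ := (htend.eventually (gt_mem_nhds (hpos 0))).exists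
  have hle := hA.apply_zero_le hn hp x
  rw [← heq, sub_self, mul_zero, zero_div, zero_mul, add_zero] at hle
  exact hx.not_ge hle

lemma half_le_of_mem_cube (hA : IsSolOmega n p ω A) (hn : 1 ≤ n) (hp : 1 ≤ p)
    {x : EuclideanSpace ℝ (Fin n)} (hx : x ∈ cube n (√(A 0 ^ (p - 1) - ω))⁻¹) :
    A 0 / 2 ≤ A x := by
  set t := A 0 ^ (p - 1) - ω
  have ht : 0 < t := sub_pos.2 (hA.lt_rpow_sub_one hn hp)
  have hnR : (0 : ℝ) < n := by exact_mod_cast hn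
  suffices A 0 ≤ A x + A 0 / 2 by linarith
  calc A 0 ≤ A x + A 0 * t / (2 * n) * ‖x‖ ^ 2 := hA.apply_zero_le hn hp x
    _ ≤ A x + A 0 * t / (2 * n) * (n * (√t)⁻¹ ^ 2) := by
      have hM : 0 < A 0 := hA.2.1 0
      gcongr
      exact norm_sq_le_of_mem_cube hx
    _ = A x + A 0 / 2 := by
      rw [inv_pow, Real.sq_sqrt ht.le]
      field_simp

theorem le_integral_sq (hA : IsSolOmega n p ω A) (hn : 1 ≤ n) (hp : p = 1 + 4 / (n + 2))
    (hint : Integrable fun x => A x ^ 2) : ω ≤ ∫ x, A x ^ 2 := by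
  set I := ∫ x, A x ^ 2
  have hI : 0 ≤ I := integral_nonneg fun _ => sq_nonneg _
  rcases lt_or_ge ω 0 with hω | hω
  · linarith
  have hp1 : 1 ≤ p := by
    have : (0 : ℝ) ≤ 4 / (n + 2) := by positivity
    linarith
  set M := A 0
  set t := M ^ (p - 1) - ω
  have hM : 0 < M := hA.2.1 0
  have ht : 0 < t := sub_pos.2 (hA.lt_rpow_sub_one hn hp1)
  have hexp : (p - 1) * ((n + 2 : ℕ) : ℝ) = 4 := by
    rw [hp]
    push_cast
    field_simp
    ring
  have hM4 : (ω + t) ^ (n + 2) = M ^ 4 := by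
    rw [add_sub_cancel, ← Real.rpow_natCast, ← Real.rpow_mul hM.le, hexp]
    norm_cast
  have hcube : ∀ x ∈ cube n (√t)⁻¹, (M / 2) ^ 2 ≤ A x ^ 2 := fun x hx =>
    pow_le_pow_left₀ (by positivity) (hA.half_le_of_mem_cube hn hp1 hx) 2
  have hbound := mul_two_mul_pow_le_integral hint (fun x => sq_nonneg (A x)) (by positivity) hcube
  have hsq : ω ^ 2 ≤ I ^ 2 := by
    refine le_of_mul_le_mul_right ?_ (by positivity : 0 < 16 * t ^ n)
    calc ω ^ 2 * (16 * t ^ n) = 16 * ω ^ 2 * t ^ n := by ring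
      _ ≤ 4 ^ n * (ω + t) ^ (n + 2) := sixteen_mul_sq_mul_pow_le hn hω ht.le
      _ = ((M / 2) ^ 2 * (2 * (√t)⁻¹) ^ n) ^ 2 * (16 * t ^ n) := by
        rw [hM4]
        field_simp
        have h4 : ((2 / √t) ^ n) ^ 2 * t ^ n = 4 ^ n := by
          rw [← pow_mul, mul_comm n 2, pow_mul, ← mul_pow, div_pow, Real.sq_sqrt ht.le]
          field_simp
          norm_num
        rw [← h4]
        ring
      _ ≤ I ^ 2 * (16 * t ^ n) := by gcongr
  exact (pow_le_pow_iff_left₀ hω hI two_ne_zero).1 hsq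

end IsSolOmega

/-- Case `p = 1 + 4/(n+2)`: if `k ≥ 1` the globally coupled problem has no positive
radially symmetric classical solution with `A²` integrable. -/
theorem stmt_12 (n : ℕ) (hn : 1 ≤ n) (p : ℝ) (hp : p = 1 + 4 / ((n : ℝ) + 2))
    (k : ℝ) (hk : 1 ≤ k) :
    ¬ ∃ A : EuclideanSpace ℝ (Fin n) → ℝ, IsSolK n p k A := by
  rintro ⟨A, hC, hpos, hrad, htend, hmax, hint, hpde⟩
  have hI : 0 ≤ ∫ y, A y ^ 2 := integral_nonneg fun _ => sq_nonneg _
  have hA : IsSolOmega n p (1 + k * ∫ y, A y ^ 2) A :=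
    ⟨hC, hpos, hrad, htend, hmax, fun x => by linarith [hpde x]⟩
  nlinarith [hA.le_integral_sq hn hp hint]
end
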